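/- For every β > 1 and every z < 0, the R-transform of the WBE distribution dominates the R-transform of the Marčenko–Pastur distribution: 2/(1−βz + √((βz−1)²+4z)) ≥ 1/(1−βz). -/

import Mathlib

lemma one_div_le_two_div_add {a s : ℝ} (ha : 0 < a) (hs₀ : 0 ≤ s) (hs : s ≤ a) :
    1 / a ≤ 2 / (a + s) := by
  rw [div_le_div_iff₀ ha (by linarith)]
  linarith

lemma sqrt_sq_add_le {a c : ℝ} (ha : 0 ≤ a) (hc : c ≤ 0) : √(a ^ 2 + c) ≤ a :=
  Real.sqrt_le_iff.mpr ⟨ha, by linarith⟩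

/-- For `β > 1` and `z < 0`, the R-transform of the WBE distribution dominates
that of the Marčenko–Pastur distribution. -/
theorem wbe_R_ge_mp_R (β z : ℝ) (hβ : 1 < β) (hz : z < 0) :
    1 / (1 - β * z) ≤ 2 / (1 - β * z + Real.sqrt ((β * z - 1) ^ 2 + 4 * z)) := by
  have hβz : β * z < 0 := mul_neg_of_pos_of_neg (by linarith) hz
  have ha : 0 < 1 - β * z := by linarith
  rw [show (β * z - 1) ^ 2 = (1 - β * z) ^ 2 by ring]
  exact one_div_le_two_div_add ha (Real.sqrt_nonneg _) (sqrt_sq_add_le ha.le (by linarith))
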